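/- For any matrix M ∈ ℝ^{m×n} with singular value decomposition M = U D Vᵀ, D = diag(r₁,…,r_k) with r₁ ≥ ⋯ ≥ r_k ≥ 0, the matrix M' = U diag(r₁,…,r_{k−1},0) Vᵀ is a closest matrix to M in Frobenius norm among matrices of rank at most k−1, and ‖M − M'‖_F = r_k. -/

import Mathlib

/-!
A matrix `B` of rank at most `k` kills some nonzero `x = V c` in the span of the `k + 1`
right singular vectors. There `‖M x‖ ≥ r_k ‖x‖`, while `‖(M - B) x‖ = ‖M x‖` and, by
Cauchy–Schwarz row by row, `‖(M - B) x‖ ≤ ‖M - B‖_F ‖x‖`; hence `‖M - B‖_F ≥ r_k`. Since `U` and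
`V` have orthonormal columns they preserve the Frobenius norm, so `‖M - M'‖_F = r_k` and the bound
is attained.
-/

open Matrix

noncomputable def frobNorm {m n : ℕ} (M : Matrix (Fin m) (Fin n) ℝ) : ℝ :=
  Real.sqrt (∑ i, ∑ j, (M i j) ^ 2)

namespace Matrix

variable {m n p q R : Type*}

theorem exists_ne_zero_mulVec_eq_zero_of_rank_lt [Fintype n] [Field R] (A : Matrix m n R)
    (hA : A.rank < Fintype.card n) : ∃ c ≠ 0, A *ᵥ c = 0 := by
  have hker : LinearMap.ker A.mulVecLin ≠ ⊥ := by
    intro h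
    have := A.mulVecLin.finrank_range_add_finrank_ker
    rw [h, finrank_bot, Module.finrank_fintype_fun_eq_card] at this
    exact hA.ne this
  obtain ⟨c, hc, hc0⟩ := Submodule.exists_mem_ne_zero_of_ne_bot hker
  exact ⟨c, hc0, hc⟩

theorem rank_mul_diagonal_mul_le [Fintype n] [Fintype p] [DecidableEq p] [Field R]
    [DecidableEq R] (U : Matrix m p R) (d : p → R) (W : Matrix p n R) :
    (U * diagonal d * W).rank ≤ Fintype.card {i // d i ≠ 0} :=
  calc (U * diagonal d * W).rank ≤ (U * diagonal d).rank := rank_mul_le_left _ _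
    _ ≤ (diagonal d).rank := rank_mul_le_right _ _
    _ = _ := rank_diagonal d

variable [Fintype m] [Fintype n] [Fintype p] [Fintype q] [DecidableEq p] [DecidableEq q]

section CommRing

variable [CommRing R]

theorem sum_sq_entries_eq_trace (A : Matrix m n R) : ∑ i, ∑ j, A i j ^ 2 = (Aᵀ * A).trace := by
  rw [trace, Finset.sum_comm]
  simp [mul_apply, sq]

theorem sum_sq_entries_mul_mul_transpose {U : Matrix m p R} {V : Matrix n q R}
    (hU : Uᵀ * U = 1) (hV : Vᵀ * V = 1) (A : Matrix p q R) :
    ∑ i, ∑ j, (U * A * Vᵀ) i j ^ 2 = ∑ i, ∑ j, A i j ^ 2 := by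
  rw [sum_sq_entries_eq_trace, sum_sq_entries_eq_trace, transpose_mul, transpose_mul,
    transpose_transpose]
  calc (V * (Aᵀ * Uᵀ) * (U * A * Vᵀ)).trace = (V * (Aᵀ * (Uᵀ * U) * A) * Vᵀ).trace := by
        simp only [Matrix.mul_assoc]
    _ = (Aᵀ * A * (Vᵀ * V)).trace := by
        rw [hU, Matrix.mul_one, trace_mul_comm, ← Matrix.mul_assoc, trace_mul_comm]
    _ = (Aᵀ * A).trace := by rw [hV, Matrix.mul_one]

theorem sum_sq_entries_diagonal (d : p → R) :
    ∑ i, ∑ j, diagonal d i j ^ 2 = ∑ i, d i ^ 2 := by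
  refine Finset.sum_congr rfl fun i _ => ?_
  rw [Finset.sum_eq_single i (fun j _ hj => by simp [diagonal_apply_ne _ hj.symm]) (by simp),
    diagonal_apply_eq]

theorem mulVec_dotProduct_mulVec_of_transpose_mul_self {U : Matrix m p R} (hU : Uᵀ * U = 1)
    (x y : p → R) : U *ᵥ x ⬝ᵥ U *ᵥ y = x ⬝ᵥ y := by
  rw [dotProduct_mulVec, vecMul_mulVec, hU, vecMul_one]

end CommRing

section LinearOrderedField

variable [Field R] [LinearOrder R] [IsStrictOrderedRing R]

theorem mulVec_dotProduct_self_le (A : Matrix m n R) (x : n → R) :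
    A *ᵥ x ⬝ᵥ A *ᵥ x ≤ (∑ i, ∑ j, A i j ^ 2) * (x ⬝ᵥ x) := by
  simp only [dotProduct, ← sq]
  rw [Finset.sum_mul]
  exact Finset.sum_le_sum fun i _ => Finset.sum_mul_sq_le_sq_mul_sq _ (A i) x

theorem sq_mul_dotProduct_self_le_diagonal_mulVec {d : p → R} {s : R} (hs : 0 ≤ s)
    (hd : ∀ i, s ≤ d i) (c : p → R) :
    s ^ 2 * (c ⬝ᵥ c) ≤ diagonal d *ᵥ c ⬝ᵥ diagonal d *ᵥ c := by
  simp only [dotProduct, mulVec_diagonal, Finset.mul_sum]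
  refine Finset.sum_le_sum fun i _ => ?_
  have := mul_le_mul (hd i) (hd i) hs (hs.trans (hd i))
  nlinarith [mul_self_nonneg (c i)]

theorem sq_le_sum_sq_entries_sub_of_rank_lt {A B : Matrix m n R} {V : Matrix n p R}
    (hV : Vᵀ * V = 1) {s : R} (hA : ∀ c, s ^ 2 * (c ⬝ᵥ c) ≤ A *ᵥ (V *ᵥ c) ⬝ᵥ A *ᵥ (V *ᵥ c))
    (hB : B.rank < Fintype.card p) : s ^ 2 ≤ ∑ i, ∑ j, (A - B) i j ^ 2 := by
  obtain ⟨c, hc0, hc⟩ :=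
    (B * V).exists_ne_zero_mulVec_eq_zero_of_rank_lt ((rank_mul_le_left B V).trans_lt hB)
  have hBx : B *ᵥ (V *ᵥ c) = 0 := by rwa [mulVec_mulVec]
  have hc_pos : 0 < c ⬝ᵥ c := (Fintype.sum_nonneg fun i => mul_self_nonneg (c i)).lt_of_ne'
    (dotProduct_self_eq_zero.not.mpr hc0)
  refine le_of_mul_le_mul_right ?_ hc_pos
  calc s ^ 2 * (c ⬝ᵥ c) ≤ A *ᵥ (V *ᵥ c) ⬝ᵥ A *ᵥ (V *ᵥ c) := hA c
    _ = (A - B) *ᵥ (V *ᵥ c) ⬝ᵥ (A - B) *ᵥ (V *ᵥ c) := by rw [sub_mulVec, hBx, sub_zero]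
    _ ≤ (∑ i, ∑ j, (A - B) i j ^ 2) * (V *ᵥ c ⬝ᵥ V *ᵥ c) := mulVec_dotProduct_self_le _ _
    _ = (∑ i, ∑ j, (A - B) i j ^ 2) * (c ⬝ᵥ c) := by
        rw [mulVec_dotProduct_mulVec_of_transpose_mul_self hV]

theorem sq_le_sum_sq_entries_svd_sub_of_rank_lt {U : Matrix m p R} {V : Matrix n p R}
    (hU : Uᵀ * U = 1) (hV : Vᵀ * V = 1) {r : p → R} {s : R} (hs : 0 ≤ s) (hr : ∀ i, s ≤ r i)
    {B : Matrix m n R} (hB : B.rank < Fintype.card p) :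
    s ^ 2 ≤ ∑ i, ∑ j, (U * diagonal r * Vᵀ - B) i j ^ 2 := by
  refine sq_le_sum_sq_entries_sub_of_rank_lt hV (fun c => ?_) hB
  rw [mulVec_mulVec, Matrix.mul_assoc, hV, Matrix.mul_one, ← mulVec_mulVec,
    mulVec_dotProduct_mulVec_of_transpose_mul_self hU]
  exact sq_mul_dotProduct_self_le_diagonal_mulVec hs hr c

end LinearOrderedField

end Matrix

/-- Eckart–Young: dropping the smallest singular value yields a closest matrix of
rank at most k−1 in Frobenius norm, with distance r_k. -/
theorem eckart_young_drop_smallest {m n k : ℕ}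
    (U : Matrix (Fin m) (Fin (k + 1)) ℝ) (V : Matrix (Fin n) (Fin (k + 1)) ℝ)
    (hU : U.transpose * U = 1) (hV : V.transpose * V = 1)
    (r : Fin (k + 1) → ℝ) (hr : ∀ i j : Fin (k + 1), i ≤ j → r j ≤ r i)
    (hpos : 0 ≤ r (Fin.last k))
    (M : Matrix (Fin m) (Fin n) ℝ)
    (hM : M = U * Matrix.diagonal r * V.transpose)
    (M' : Matrix (Fin m) (Fin n) ℝ)
    (hM' : M' = U * Matrix.diagonal (fun i => if i = Fin.last k then 0 else r i) *
        V.transpose) :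
    M'.rank ≤ k ∧ frobNorm (M - M') = r (Fin.last k) ∧
      ∀ B : Matrix (Fin m) (Fin n) ℝ, B.rank ≤ k →
        frobNorm (M - M') ≤ frobNorm (M - B) := by
  have hdiff : M - M' = U * diagonal (Pi.single (Fin.last k) (r (Fin.last k))) * Vᵀ := by
    rw [hM, hM', ← Matrix.sub_mul, ← Matrix.mul_sub, diagonal_sub]
    congr 3
    ext i
    by_cases h : i = Fin.last k <;> simp [h]
  have hdist : frobNorm (M - M') = r (Fin.last k) := by
    rw [frobNorm, hdiff, sum_sq_entries_mul_mul_transpose hU hV, sum_sq_entries_diagonal]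
    simp [Pi.single_apply, hpos]
  refine ⟨?_, hdist, fun B hB => ?_⟩
  · rw [hM', ← Nat.lt_add_one_iff]
    refine (rank_mul_diagonal_mul_le U _ Vᵀ).trans_lt ?_
    simpa using Fintype.card_subtype_lt (x := Fin.last k) (by simp)
  · rw [hdist, frobNorm, Real.le_sqrt hpos (by positivity), hM]
    exact sq_le_sum_sq_entries_svd_sub_of_rank_lt hU hV hpos
      (fun i => hr i (Fin.last k) (Fin.le_last i)) (by simpa using Nat.lt_add_one_of_le hB)
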